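/- arXiv:2205.15113 — 7 statements merged into one kernel-verified Lean document; each statement's English description precedes it below -/
import Mathlib

section
/- For every k ≥ 1, every γ ∈ (0,1], every h ∈ Δ_k, and every index b ∈ {1,…,k}, there exists a scalar p ∈ [0,1] such that p · ((2 h · e_b − 1)/γ − 1) ≤ 2(Π(h/γ) · e_b − 1). -/
/-!
The projection `q` of `x` onto the simplex satisfies the variational inequality
`⟪x - q, r - q⟫ ≤ 0` for all `r` in the simplex; testing it against the point obtained by
moving the mass of a coordinate `j` with `q j > 0` to any coordinate `l` shows that the gap
`x i - q i` is maximal at every `i` in the support of `q`. If `q b = 1` take `p = 0`. Otherwise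
some `j ≠ b` lies in the support; for `x = h / γ` the gaps sum to `1 / γ - 1 ≥ 0` and, when the
gap at `b` is positive, are all nonnegative, so `2 (x b - q b) ≤ (x b - q b) + (x j - q j)`
is at most `1 / γ - 1`: the claim with `p = 1`.
-/

open scoped BigOperators

/-- The probability simplex in `ℝ^k`. -/
def simplex (k : ℕ) : Set (EuclideanSpace ℝ (Fin k)) :=
  {p | (∀ i, 0 ≤ p i) ∧ ∑ i, p i = 1}

/-- `q` is the Euclidean (L2) metric projection of `x` onto the probability simplex. -/
def IsL2ProjOnSimplex (k : ℕ) (x q : EuclideanSpace ℝ (Fin k)) : Prop :=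
  q ∈ simplex k ∧ ∀ r ∈ simplex k, ‖q - x‖ ≤ ‖r - x‖

theorem convex_simplex (k : ℕ) : Convex ℝ (simplex k) :=
  (convex_stdSimplex ℝ (Fin k)).linear_preimage (WithLp.linearEquiv 2 ℝ (Fin k → ℝ)).toLinearMap

theorem exists_ne_pos_of_mem_simplex {k : ℕ} {q : EuclideanSpace ℝ (Fin k)} (hq : q ∈ simplex k)
    {b : Fin k} (hqb : q b < 1) : ∃ j ≠ b, 0 < q j := by
  by_contra! hle
  have hsum : ∑ i, q i = q b :=
    Finset.sum_eq_single b (fun i _ hib => le_antisymm (hle i hib) (hq.1 i)) (by simp)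
  linarith [hq.2]

namespace IsL2ProjOnSimplex

variable {k : ℕ} {x q : EuclideanSpace ℝ (Fin k)}

theorem inner_sub_nonpos (hq : IsL2ProjOnSimplex k x q) :
    ∀ r ∈ simplex k, inner ℝ (x - q) (r - q) ≤ 0 := by
  have : Nonempty (simplex k) := ⟨⟨q, hq.1⟩⟩
  refine (norm_eq_iInf_iff_real_inner_le_zero (convex_simplex k) hq.1).1 (le_antisymm ?_ ?_)
  · exact le_ciInf fun r => by rw [norm_sub_rev, norm_sub_rev x]; exact hq.2 r r.2
  · exact ciInf_le ⟨0, by rintro _ ⟨w, rfl⟩; exact norm_nonneg _⟩ (⟨q, hq.1⟩ : simplex k)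

theorem sub_le_sub_of_pos (hq : IsL2ProjOnSimplex k x q) {j : Fin k} (hqj : 0 < q j)
    (l : Fin k) : x l - q l ≤ x j - q j := by
  -- the competitor obtained by moving all the mass of `q` at `j` to `l`
  set r := q - EuclideanSpace.single j (q j) + EuclideanSpace.single l (q j)
  have hr : r ∈ simplex k := by
    refine ⟨fun i => ?_, ?_⟩
    · have hri : r i = q i - (if i = j then q j else 0) + (if i = l then q j else 0) := by
        simp [r]
      have := hq.1.1 i
      rw [hri]
      split_ifs with hij <;> (try subst hij) <;> linarith
    · simp [r, Finset.sum_add_distrib, Finset.sum_sub_distrib, hq.1.2]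
  have hinner : inner ℝ (x - q) (r - q) = q j * ((x l - q l) - (x j - q j)) := by
    simp only [r, inner_add_right, inner_sub_right, EuclideanSpace.inner_single_right,
      PiLp.sub_apply, Real.ringHom_apply]
    ring
  have := hq.inner_sub_nonpos r hr
  rw [hinner] at this
  exact sub_nonpos.1 (nonpos_of_mul_nonpos_right this hqj)

theorem two_mul_sub_le_sum_sub_one (hq : IsL2ProjOnSimplex k x q) (hx : ∀ i, 0 ≤ x i)
    (hsum : 1 ≤ ∑ i, x i) {b : Fin k} (hqb : q b < 1) : 2 * (x b - q b) ≤ ∑ i, x i - 1 := by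
  rcases le_or_gt (x b - q b) 0 with hd | hd
  · linarith
  obtain ⟨j, hjb, hqj⟩ := exists_ne_pos_of_mem_simplex hq.1 hqb
  have hgap : ∀ i, 0 ≤ x i - q i := fun i => by
    rcases (hq.1.1 i).eq_or_lt with hqi | hqi
    · rw [← hqi, sub_zero]; exact hx i
    · linarith [hq.sub_le_sub_of_pos hqi b]
  calc 2 * (x b - q b) ≤ (x b - q b) + (x j - q j) := by linarith [hq.sub_le_sub_of_pos hqj b]
    _ = ∑ i ∈ {b, j}, (x i - q i) := by rw [Finset.sum_pair hjb.symm]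
    _ ≤ ∑ i, (x i - q i) :=
      Finset.sum_le_sum_of_subset_of_nonneg (Finset.subset_univ _) fun i _ _ => hgap i
    _ = ∑ i, x i - 1 := by rw [Finset.sum_sub_distrib, hq.1.2]

end IsL2ProjOnSimplex

theorem stmt_3_general (k : ℕ) (γ : ℝ) (hγ : γ ∈ Set.Ioc (0 : ℝ) 1)
    (h : EuclideanSpace ℝ (Fin k)) (hh : h ∈ simplex k) (b : Fin k)
    (q : EuclideanSpace ℝ (Fin k)) (hq : IsL2ProjOnSimplex k (γ⁻¹ • h) q) :
    ∃ p ∈ Set.Icc (0 : ℝ) 1, p * ((2 * h b - 1) / γ - 1) ≤ 2 * (q b - 1) := by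
  obtain ⟨hγ0, hγ1⟩ := hγ
  have hqb : q b ≤ 1 := hq.1.2 ▸ Finset.single_le_sum (fun i _ => hq.1.1 i) (Finset.mem_univ b)
  rcases hqb.eq_or_lt with hqb | hqb
  · exact ⟨0, ⟨le_rfl, zero_le_one⟩, by simp [hqb]⟩
  have hsmul : ∀ i, (γ⁻¹ • h) i = γ⁻¹ * h i := fun i => rfl
  have hsum : ∑ i, (γ⁻¹ • h) i = γ⁻¹ := by simp only [hsmul, ← Finset.mul_sum, hh.2, mul_one]
  have hkey := hq.two_mul_sub_le_sum_sub_one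
    (fun i => (hsmul i).symm ▸ mul_nonneg (inv_nonneg.2 hγ0.le) (hh.1 i))
    (by rw [hsum]; exact (one_le_inv₀ hγ0).2 hγ1) hqb
  rw [hsum, hsmul] at hkey
  refine ⟨1, ⟨zero_le_one, le_rfl⟩, ?_⟩
  rw [one_mul, div_eq_mul_inv]
  linarith

/-- for every `k ≥ 1`, `γ ∈ (0,1]`, `h ∈ Δ_k` and `b ∈ [k]`, there exists a
scalar `p ∈ [0,1]` with `p · ((2 h·e_b − 1)/γ − 1) ≤ 2(Π(h/γ) · e_b − 1)`.
(Note `h · e_b = h b` and `Π(h/γ) · e_b = Π(h/γ) b`.) -/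
theorem stmt_3 (k : ℕ) (hk : 1 ≤ k) (γ : ℝ) (hγ : γ ∈ Set.Ioc (0 : ℝ) 1)
    (h : EuclideanSpace ℝ (Fin k)) (hh : h ∈ simplex k) (b : Fin k)
    (q : EuclideanSpace ℝ (Fin k)) (hq : IsL2ProjOnSimplex k (γ⁻¹ • h) q) :
    ∃ p ∈ Set.Icc (0 : ℝ) 1, p * ((2 * h b - 1) / γ - 1) ≤ 2 * (q b - 1) :=
  stmt_3_general k γ hγ h hh b q hq
end

section
/- For every k ≥ 1 and every vector g ∈ ℝ^k, there exists a unique μ ∈ ℝ such that Σ_{i=1}^{k} max(0, g_i − μ) = 1. -/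
open scoped BigOperators

/-- for every `k ≥ 1` and every `g ∈ ℝ^k`, there exists a unique `μ ∈ ℝ`
such that `∑ i, max 0 (g i − μ) = 1`. -/
theorem stmt_7 (k : ℕ) (hk : 1 ≤ k) (g : Fin k → ℝ) :
    ∃! μ : ℝ, ∑ i, max 0 (g i - μ) = 1 := by
  haveI : Nonempty (Fin k) := ⟨⟨0, hk⟩⟩
  set f : ℝ → ℝ := fun μ => ∑ i, max 0 (g i - μ) with hf
  have hcont : Continuous f := by
    apply continuous_finset_sum
    intro i _
    exact continuous_const.max (continuous_const.sub continuous_id)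
  set a : ℝ := (Finset.univ.inf' Finset.univ_nonempty g) - 1 with ha
  set b : ℝ := Finset.univ.sup' Finset.univ_nonempty g with hb
  have hab : a ≤ b := by
    have h1 : Finset.univ.inf' Finset.univ_nonempty g ≤ b :=
      le_trans (Finset.inf'_le _ (Finset.mem_univ (⟨0, hk⟩ : Fin k)))
        (Finset.le_sup' _ (Finset.mem_univ _))
    simp only [ha]; linarith
  have hfa : 1 ≤ f a := by
    have : ∀ i : Fin k, (1:ℝ) ≤ max 0 (g i - a) := by
      intro i
      have h1 : Finset.univ.inf' Finset.univ_nonempty g ≤ g i :=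
        Finset.inf'_le _ (Finset.mem_univ i)
      have : (1:ℝ) ≤ g i - a := by simp only [ha]; linarith
      exact this.trans (le_max_right _ _)
    calc (1:ℝ) = ∑ _i : Fin k, (1:ℝ) / k := by
            rw [Finset.sum_const]
            simp
            field_simp
      _ ≤ ∑ i, max 0 (g i - a) := by
            apply Finset.sum_le_sum
            intro i _
            have hk' : (1:ℝ) ≤ k := by exact_mod_cast hk
            have := this i
            have hdiv : (1:ℝ)/k ≤ 1 := by
              rw [div_le_one (by linarith)]; exact hk'
            linarith
  have hfb : f b = 0 := by
    apply Finset.sum_eq_zero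
    intro i _
    have : g i ≤ b := Finset.le_sup' _ (Finset.mem_univ i)
    simp [max_eq_left, sub_nonpos.mpr this]
  -- existence via IVT (decreasing)
  have hiv : Set.Icc (f b) (f a) ⊆ f '' Set.Icc a b :=
    intermediate_value_Icc' hab hcont.continuousOn
  have h1mem : (1:ℝ) ∈ Set.Icc (f b) (f a) := ⟨by rw [hfb]; norm_num, hfa⟩
  obtain ⟨μ, _, hμ⟩ := hiv h1mem
  refine ⟨μ, hμ, ?_⟩
  -- uniqueness
  have key : ∀ x y : ℝ, x < y → f x = 1 → f y ≠ 1 := by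
    intro x y hxy hfx hfy
    -- some coordinate is positive at x
    have hpos : ∃ i : Fin k, 0 < g i - x := by
      by_contra h
      push_neg at h
      have : f x = 0 := Finset.sum_eq_zero fun i _ => by
        simp [max_eq_left (h i)]
      rw [this] at hfx; norm_num at hfx
    obtain ⟨i, hi⟩ := hpos
    have hstrict : f y < f x := by
      apply Finset.sum_lt_sum
      · intro j _
        apply max_le_max le_rfl
        linarith
      · refine ⟨i, Finset.mem_univ i, ?_⟩
        have h1 : max 0 (g i - x) = g i - x := max_eq_right hi.le
        rw [h1]
        rcases le_or_gt (g i - y) 0 with h | h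
        · rw [max_eq_left h]; linarith
        · rw [max_eq_right h.le]; linarith
    rw [hfx, hfy] at hstrict; norm_num at hstrict
  intro y hy
  rcases lt_trichotomy y μ with h | h | h
  · exact absurd hμ (key y μ h hy)
  · exact h
  · exact absurd hy (key μ y h hμ)
end

section
/- For every k ≥ 1, every g ∈ ℝ^k, and every μ ∈ ℝ satisfying Σ_{i=1}^{k} max(0, g_i − μ) = 1, the vector v ∈ ℝ^k with coordinates v_i = max(0, g_i − μ) lies in Δ_k and equals the Euclidean projection Π(g), i.e., v is the unique point of Δ_k minimizing ‖q − g‖₂ over q ∈ Δ_k. -/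
open scoped BigOperators

/-!
The threshold vector `v = (max 0 (g i - μ))ᵢ` satisfies the variational inequality
`⟪g - v, r - v⟫ ≤ 0` for every `r ∈ Δ_k`: coordinatewise `(g i - v i) (r i - v i) ≤ μ (r i - v i)`,
with equality where `v i > 0` and because `g i - μ ≤ 0 ≤ r i` elsewhere, and the right-hand sides
sum to `μ (1 - 1) = 0`. By Pythagoras this inequality makes `v` the unique nearest point of the
simplex to `g`.
-/

section NearestPoint

variable {F : Type*} [NormedAddCommGroup F] [InnerProductSpace ℝ F]

open RealInnerProductSpace

theorem norm_sub_sq_add_norm_sub_sq_le_of_inner_le_zero {u v w : F}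
    (h : ⟪u - v, w - v⟫ ≤ 0) : ‖v - u‖ ^ 2 + ‖w - v‖ ^ 2 ≤ ‖w - u‖ ^ 2 := by
  have hsplit : w - u = (w - v) + (v - u) := by abel
  have hinner : ⟪w - v, v - u⟫ = -⟪u - v, w - v⟫ := by
    rw [real_inner_comm, ← neg_sub u v, inner_neg_left]
  rw [hsplit, norm_add_sq_real, hinner]
  linarith

variable {K : Set F} {u v : F}

theorem norm_sub_le_of_forall_inner_le_zero (hK : ∀ w ∈ K, ⟪u - v, w - v⟫ ≤ 0) {w : F}
    (hw : w ∈ K) : ‖v - u‖ ≤ ‖w - u‖ := by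
  have hpyth := norm_sub_sq_add_norm_sub_sq_le_of_inner_le_zero (hK w hw)
  exact (pow_le_pow_iff_left₀ (norm_nonneg _) (norm_nonneg _) two_ne_zero).mp
    (by linarith [sq_nonneg ‖w - v‖])

theorem eq_of_forall_inner_le_zero_of_forall_norm_sub_le (hv : v ∈ K)
    (hK : ∀ w ∈ K, ⟪u - v, w - v⟫ ≤ 0) {q : F} (hq : q ∈ K)
    (hq_min : ∀ w ∈ K, ‖q - u‖ ≤ ‖w - u‖) : q = v := by
  have hpyth := norm_sub_sq_add_norm_sub_sq_le_of_inner_le_zero (hK q hq)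
  have hle : ‖q - u‖ ^ 2 ≤ ‖v - u‖ ^ 2 := by gcongr; exact hq_min v hv
  have hsq : ‖q - v‖ ^ 2 = 0 := le_antisymm (by linarith) (sq_nonneg _)
  exact sub_eq_zero.mp (norm_eq_zero.mp (pow_eq_zero_iff two_ne_zero |>.mp hsq))

end NearestPoint

theorem sub_max_zero_mul_le {a μ r : ℝ} (hr : 0 ≤ r) :
    (a - max 0 (a - μ)) * (r - max 0 (a - μ)) ≤ μ * (r - max 0 (a - μ)) := by
  rcases le_or_gt (a - μ) 0 with h | h
  · rw [max_eq_left h, sub_zero, sub_zero]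
    exact mul_le_mul_of_nonneg_right (by linarith) hr
  · rw [max_eq_right h.le, sub_sub_cancel]

theorem inner_sub_le_zero_of_max_zero_sub {k : ℕ} {g v : EuclideanSpace ℝ (Fin k)} {μ : ℝ}
    (hv : ∀ i, v i = max 0 (g i - μ)) (hv_sum : ∑ i, v i = 1) {r : EuclideanSpace ℝ (Fin k)}
    (hr : r ∈ simplex k) : inner ℝ (g - v) (r - v) ≤ 0 := by
  obtain ⟨hr_nonneg, hr_sum⟩ := hr
  calc inner ℝ (g - v) (r - v) = ∑ i, (g i - v i) * (r i - v i) := by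
        simp only [PiLp.inner_apply, PiLp.sub_apply, RCLike.inner_apply, conj_trivial, mul_comm]
    _ ≤ ∑ i, μ * (r i - v i) := Finset.sum_le_sum fun i _ => hv i ▸ sub_max_zero_mul_le (hr_nonneg i)
    _ = μ * (∑ i, r i - ∑ i, v i) := by rw [← Finset.mul_sum, Finset.sum_sub_distrib]
    _ = 0 := by rw [hr_sum, hv_sum, sub_self, mul_zero]

theorem stmt_8_general (k : ℕ) (g : EuclideanSpace ℝ (Fin k)) (μ : ℝ)
    (hμ : ∑ i, max 0 (g i - μ) = 1)
    (v : EuclideanSpace ℝ (Fin k)) (hv : ∀ i, v i = max 0 (g i - μ)) :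
    v ∈ simplex k ∧ (∀ r ∈ simplex k, ‖v - g‖ ≤ ‖r - g‖) ∧
      ∀ q ∈ simplex k, (∀ r ∈ simplex k, ‖q - g‖ ≤ ‖r - g‖) → q = v := by
  have hv_sum : ∑ i, v i = 1 := by simp_rw [hv]; exact hμ
  have hv_mem : v ∈ simplex k := ⟨fun i => hv i ▸ le_max_left _ _, hv_sum⟩
  have hvar := fun r (hr : r ∈ simplex k) => inner_sub_le_zero_of_max_zero_sub hv hv_sum hr
  exact ⟨hv_mem, fun r hr => norm_sub_le_of_forall_inner_le_zero hvar hr,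
    fun q hq hq_min => eq_of_forall_inner_le_zero_of_forall_norm_sub_le hv_mem hvar hq hq_min⟩

/-- if `μ` satisfies `∑ i, max 0 (g i − μ) = 1`, then the vector
`v = (max 0 (g i − μ))_i` lies in `Δ_k` and is the unique point of `Δ_k` minimizing the
Euclidean distance to `g`, i.e. `v = Π(g)`. -/
theorem stmt_8 (k : ℕ) (hk : 1 ≤ k) (g : EuclideanSpace ℝ (Fin k)) (μ : ℝ)
    (hμ : ∑ i, max 0 (g i - μ) = 1)
    (v : EuclideanSpace ℝ (Fin k)) (hv : ∀ i, v i = max 0 (g i - μ)) :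
    v ∈ simplex k ∧ (∀ r ∈ simplex k, ‖v - g‖ ≤ ‖r - g‖) ∧
      ∀ q ∈ simplex k, (∀ r ∈ simplex k, ‖q - g‖ ≤ ‖r - g‖) → q = v :=
  stmt_8_general k g μ hμ v hv
end

section
/- For every k ≥ 2, every γ ∈ (0,1], and every h ∈ Δ_k, let q = Π(h/γ). If q has at least two nonzero coordinates, then for every index i ∈ {1,…,k}, it holds that (2h_i − 1)/γ − 1 ≤ 2(q_i − 1). -/
open scoped BigOperators InnerProductSpace

/-- for `k ≥ 2`, `γ ∈ (0,1]`, `h ∈ Δ_k` and `q = Π(h/γ)`: if `q` has at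
least two nonzero coordinates, then every index `i` satisfies
`(2h_i − 1)/γ − 1 ≤ 2(q_i − 1)`. -/
theorem stmt_11 (k : ℕ) (hk : 2 ≤ k) (γ : ℝ) (hγ : γ ∈ Set.Ioc (0 : ℝ) 1)
    (h : EuclideanSpace ℝ (Fin k)) (hh : h ∈ simplex k)
    (q : EuclideanSpace ℝ (Fin k)) (hq : IsL2ProjOnSimplex k (γ⁻¹ • h) q)
    (hcard : 2 ≤ (Finset.univ.filter fun j => q j ≠ 0).card) :
    ∀ i, (2 * h i - 1) / γ - 1 ≤ 2 * (q i - 1) := by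
  obtain ⟨hγ0, hγ1⟩ := hγ
  obtain ⟨⟨hq0, hq1⟩, hmin⟩ := hq
  set x : EuclideanSpace ℝ (Fin k) := γ⁻¹ • h with hxdef
  have hx0 : ∀ i, 0 ≤ x i := by
    intro i
    have : x i = γ⁻¹ * h i := rfl
    rw [this]
    exact mul_nonneg (by positivity) (hh.1 i)
  have hxsum : ∑ i, x i = γ⁻¹ := by
    have : ∀ i, x i = γ⁻¹ * h i := fun i => rfl
    simp_rw [this, ← Finset.mul_sum, hh.2, mul_one]
  -- variational inequality
  have VI : ∀ r ∈ simplex k, ⟪x - q, r - q⟫_ℝ ≤ 0 := by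
    intro r hr
    by_contra hc
    push_neg at hc
    have hd : (0:ℝ) < ‖r - q‖^2 := by
      have hne : r - q ≠ 0 := by
        intro h0
        rw [h0, inner_zero_right] at hc
        exact lt_irrefl 0 hc
      exact pow_pos (norm_pos_iff.mpr hne) 2
    set t : ℝ := min 1 (⟪x - q, r - q⟫_ℝ / ‖r - q‖^2) with ht
    have ht0 : 0 < t := lt_min one_pos (div_pos hc hd)
    have ht1 : t ≤ 1 := min_le_left _ _
    have htd : t * ‖r - q‖^2 ≤ ⟪x - q, r - q⟫_ℝ := by
      have := min_le_right 1 (⟪x - q, r - q⟫_ℝ / ‖r - q‖^2)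
      calc t * ‖r - q‖^2 ≤ (⟪x - q, r - q⟫_ℝ / ‖r - q‖^2) * ‖r - q‖^2 :=
            mul_le_mul_of_nonneg_right this (le_of_lt hd)
        _ = ⟪x - q, r - q⟫_ℝ := div_mul_cancel₀ _ (ne_of_gt hd)
    set s : EuclideanSpace ℝ (Fin k) := q + t • (r - q) with hs
    have hsmem : s ∈ simplex k := by
      constructor
      · intro i
        have : s i = q i + t * (r i - q i) := rfl
        rw [this]
        have h1 : q i + t * (r i - q i) = (1 - t) * q i + t * r i := by ring
        rw [h1]
        exact add_nonneg (mul_nonneg (by linarith) (hq0 i)) (mul_nonneg ht0.le (hr.1 i))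
      · have : ∀ i, s i = q i + t * (r i - q i) := fun i => rfl
        simp_rw [this]
        rw [Finset.sum_add_distrib, hq1, ← Finset.mul_sum, Finset.sum_sub_distrib, hr.2, hq1]
        ring
    have hle := hmin s hsmem
    have hsq : ‖q - x‖^2 ≤ ‖s - x‖^2 := by
      have := norm_nonneg (q - x)
      nlinarith [hle]
    have hexp : ‖s - x‖^2 = ‖q - x‖^2 + 2 * t * ⟪q - x, r - q⟫_ℝ + t^2 * ‖r - q‖^2 := by
      have : s - x = (q - x) + t • (r - q) := by rw [hs]; abel
      rw [this, @norm_add_sq_real, real_inner_smul_right, norm_smul]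
      simp [mul_pow, abs_of_nonneg ht0.le]
      ring
    have hinner : ⟪q - x, r - q⟫_ℝ = - ⟪x - q, r - q⟫_ℝ := by
      rw [← inner_neg_left]; simp
    rw [hexp, hinner] at hsq
    -- 0 ≤ -2 t c + t^2 d, with t d ≤ c, t > 0, c > 0
    nlinarith [mul_le_mul_of_nonneg_left htd ht0.le]
  -- key: for a b with q b ≠ 0, x a - q a ≤ x b - q b
  have key : ∀ a b, q b ≠ 0 → x a - q a ≤ x b - q b := by
    intro a b hb
    rcases eq_or_ne a b with rfl | hab
    · exact le_rfl
    have hqb : 0 < q b := lt_of_le_of_ne (hq0 b) (Ne.symm hb)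
    set r : EuclideanSpace ℝ (Fin k) :=
      q + q b • (EuclideanSpace.single a (1:ℝ) - EuclideanSpace.single b 1) with hr
    have hrapp : ∀ i, r i = q i + q b * ((if i = a then (1:ℝ) else 0) - (if i = b then 1 else 0)) := by
      intro i
      have : r i = q i + q b * ((EuclideanSpace.single a (1:ℝ)) i - (EuclideanSpace.single b (1:ℝ)) i) := rfl
      rw [this, EuclideanSpace.single_apply, EuclideanSpace.single_apply]
    have hrmem : r ∈ simplex k := by
      constructor
      · intro i
        rw [hrapp i]
        rcases eq_or_ne i a with rfl | hia
        · simp [hab]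
          linarith [hq0 i, hqb.le]
        rcases eq_or_ne i b with rfl | hib
        · simp [hia]
        · simp [hia, hib]
          exact hq0 i
      · simp_rw [hrapp]
        rw [Finset.sum_add_distrib, hq1, ← Finset.mul_sum, Finset.sum_sub_distrib]
        simp [Finset.sum_ite_eq']
    have hVI := VI r hrmem
    have hinner : ⟪x - q, r - q⟫_ℝ = q b * ((x a - q a) - (x b - q b)) := by
      have : r - q = q b • (EuclideanSpace.single a (1:ℝ) - EuclideanSpace.single b 1) := by
        rw [hr]; abel
      rw [this, real_inner_smul_right, inner_sub_right,
        EuclideanSpace.inner_single_right, EuclideanSpace.inner_single_right]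
      simp [PiLp.sub_apply]
    rw [hinner] at hVI
    nlinarith
  obtain ⟨j1, hj1, j2, hj2, hjne⟩ := Finset.one_lt_card.mp (by omega : 1 < (Finset.univ.filter fun j => q j ≠ 0).card)
  have hj1' : q j1 ≠ 0 := (Finset.mem_filter.mp hj1).2
  have hj2' : q j2 ≠ 0 := (Finset.mem_filter.mp hj2).2
  set τ : ℝ := x j1 - q j1 with hτ
  have hτ2 : x j2 - q j2 = τ := le_antisymm (key j2 j1 hj1') (key j1 j2 hj2')
  have hub : ∀ i, x i - q i ≤ τ := fun i => key i j1 hj1'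
  have hγinv : (1:ℝ) ≤ γ⁻¹ := by
    nlinarith [inv_pos.mpr hγ0, mul_inv_cancel₀ (ne_of_gt hγ0)]
  have hτbound : 2 * τ ≤ γ⁻¹ - 1 := by
    rcases le_or_gt τ 0 with hτ0 | hτ0
    · linarith
    · -- sum argument
      have hsum : ∑ i, (x i - q i) = γ⁻¹ - 1 := by
        rw [Finset.sum_sub_distrib, hxsum, hq1]
      have hterm : ∀ i, i ≠ j1 → i ≠ j2 → 0 ≤ x i - q i := by
        intro i _ _
        rcases eq_or_ne (q i) 0 with h0 | h0
        · rw [h0, sub_zero]; exact hx0 i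
        · have := key j1 i h0
          linarith
      have hpair : ({j1, j2} : Finset (Fin k)) ⊆ Finset.univ := Finset.subset_univ _
      have hsplit : 2 * τ ≤ ∑ i, (x i - q i) := by
        have h2 : ∑ i ∈ ({j1, j2} : Finset (Fin k)), (x i - q i) = 2 * τ := by
          rw [Finset.sum_pair hjne, hτ2]; linarith
        calc 2 * τ = ∑ i ∈ ({j1, j2} : Finset (Fin k)), (x i - q i) := h2.symm
          _ ≤ ∑ i, (x i - q i) := Finset.sum_le_sum_of_subset_of_nonneg hpair (by
              intro i _ hi
              simp only [Finset.mem_insert, Finset.mem_singleton] at hi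
              push_neg at hi
              exact hterm i hi.1 hi.2)
      linarith [hsum ▸ hsplit]
  intro i
  have hi := hub i
  have hxi : x i = γ⁻¹ * h i := rfl
  rw [hxi] at hi
  have hγne : γ ≠ 0 := ne_of_gt hγ0
  have hkey : γ⁻¹ * h i - q i ≤ (γ⁻¹ - 1) / 2 := by
    rcases le_or_gt τ 0 with hτ0 | hτ0
    · linarith
    · linarith
  have hdiv : (2 * h i - 1) / γ = 2 * (γ⁻¹ * h i) - γ⁻¹ := by
    field_simp
  rw [hdiv]
  linarith
end

section
/- For every k ≥ 2, every γ ∈ (0,1], and every h ∈ Δ_k: if Π(h/γ) = e_j for some index j ∈ {1,…,k} (i.e., the projection places all mass on a single label), then for every index i ≠ j, it holds that h_i ≤ (1 − γ)/2. -/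
open scoped BigOperators

/-!
The variational inequality of the projection `e_j = Π(h/γ)`, tested at the vertex `e_i`, gives
`h_i/γ + 1 ≤ h_j/γ`, i.e. `h_j - h_i ≥ γ`; together with `h_i + h_j ≤ 1` this bounds `2 h_i`
by `1 - γ`.
-/

open scoped RealInnerProductSpace

theorem real_inner_sub_le_zero_of_forall_norm_sub_le {F : Type*} [NormedAddCommGroup F]
    [InnerProductSpace ℝ F] {K : Set F} (hK : Convex ℝ K) {x q : F} (hq : q ∈ K)
    (hmin : ∀ r ∈ K, ‖q - x‖ ≤ ‖r - x‖) : ∀ r ∈ K, ⟪x - q, r - q⟫ ≤ 0 := by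
  have : Nonempty K := ⟨⟨q, hq⟩⟩
  refine (norm_eq_iInf_iff_real_inner_le_zero hK hq).mp (le_antisymm ?_ ?_)
  · exact le_ciInf fun r => by simpa only [norm_sub_rev x] using hmin r r.2
  · exact ciInf_le ⟨0, Set.forall_mem_range.mpr fun _ => norm_nonneg _⟩ (⟨q, hq⟩ : K)

namespace simplex

theorem convex (k : ℕ) : Convex ℝ (simplex k) := by
  rintro p ⟨hp0, hp1⟩ r ⟨hr0, hr1⟩ a b ha hb hab
  refine ⟨fun i => ?_, ?_⟩
  · simp only [PiLp.add_apply, PiLp.smul_apply, smul_eq_mul]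
    exact add_nonneg (mul_nonneg ha (hp0 i)) (mul_nonneg hb (hr0 i))
  · simp only [PiLp.add_apply, PiLp.smul_apply, smul_eq_mul, Finset.sum_add_distrib,
      ← Finset.mul_sum, hp1, hr1, mul_one, hab]

theorem single_mem {k : ℕ} (i : Fin k) : EuclideanSpace.single i (1 : ℝ) ∈ simplex k := by
  refine ⟨fun m => ?_, ?_⟩
  · rw [PiLp.single_apply]
    split_ifs <;> norm_num
  · simp [PiLp.single_apply]

theorem add_apply_le_one {k : ℕ} {p : EuclideanSpace ℝ (Fin k)} (hp : p ∈ simplex k)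
    {i j : Fin k} (hij : i ≠ j) : p i + p j ≤ 1 := by
  obtain ⟨hp0, hp1⟩ := hp
  calc p i + p j = ∑ m ∈ {i, j}, p m := (Finset.sum_pair hij).symm
    _ ≤ ∑ m, p m := Finset.sum_le_sum_of_subset_of_nonneg (Finset.subset_univ _)
        fun m _ _ => hp0 m
    _ = 1 := hp1

end simplex

theorem real_inner_sub_single_sub_single {k : ℕ} (x : EuclideanSpace ℝ (Fin k)) {i j : Fin k}
    (hij : i ≠ j) :
    ⟪x - EuclideanSpace.single j 1, EuclideanSpace.single i 1 - EuclideanSpace.single j 1⟫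
      = x i - x j + 1 := by
  simp only [inner_sub_left, inner_sub_right, EuclideanSpace.inner_single_right,
    PiLp.single_apply, if_pos, if_neg hij, conj_trivial]
  ring

theorem IsL2ProjOnSimplex.apply_add_one_le {k : ℕ} {x : EuclideanSpace ℝ (Fin k)} {j : Fin k}
    (hq : IsL2ProjOnSimplex k x (EuclideanSpace.single j 1)) {i : Fin k} (hij : i ≠ j) :
    x i + 1 ≤ x j := by
  have := real_inner_sub_le_zero_of_forall_norm_sub_le (simplex.convex k) hq.1 hq.2 _
    (simplex.single_mem i)
  rw [real_inner_sub_single_sub_single x hij] at this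
  linarith

theorem stmt_12_general (k : ℕ) (γ : ℝ) (hγ : γ ∈ Set.Ioc (0 : ℝ) 1)
    (h : EuclideanSpace ℝ (Fin k)) (hh : h ∈ simplex k) (j : Fin k)
    (hq : IsL2ProjOnSimplex k (γ⁻¹ • h) (EuclideanSpace.single j (1 : ℝ))) :
    ∀ i, i ≠ j → h i ≤ (1 - γ) / 2 := by
  intro i hij
  have hγ0 : 0 < γ := hγ.1
  have hgap : h i + γ ≤ h j :=
    calc h i + γ = γ * (γ⁻¹ * h i + 1) := by field_simp
      _ ≤ γ * (γ⁻¹ * h j) := by gcongr; exact hq.apply_add_one_le hij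
      _ = h j := by field_simp
  linarith [simplex.add_apply_le_one hh hij]

/-- for `k ≥ 2`, `γ ∈ (0,1]`, `h ∈ Δ_k`: if `Π(h/γ) = e_j` for some `j`,
then every index `i ≠ j` satisfies `h i ≤ (1 − γ)/2`. -/
theorem stmt_12 (k : ℕ) (hk : 2 ≤ k) (γ : ℝ) (hγ : γ ∈ Set.Ioc (0 : ℝ) 1)
    (h : EuclideanSpace ℝ (Fin k)) (hh : h ∈ simplex k) (j : Fin k)
    (hq : IsL2ProjOnSimplex k (γ⁻¹ • h) (EuclideanSpace.single j (1 : ℝ))) :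
    ∀ i, i ≠ j → h i ≤ (1 - γ) / 2 :=
  stmt_12_general k γ hγ h hh j hq
end

section
/- For every k ≥ 1 and every x ∈ ℝ^k, let x̃ = x − ((Σ_i x_i − 1)/k)·𝟙 be the orthogonal projection of x onto the affine hyperplane {z ∈ ℝ^k : Σ_i z_i = 1}. Then Π(x) = Π(x̃); in particular, if x̃ ∈ Δ_k then Π(x) = x̃. -/
/-!
If `y - x` is orthogonal to every `p - y` with `p` in the affine hyperplane `∑ i, p i = 1`
through `y`, then Pythagoras gives `‖p - x‖² = ‖p - y‖² + ‖y - x‖²` on that hyperplane, so the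
distances to `x` and to `y` differ by a constant there and, since the simplex lies in the
hyperplane, both points have the same nearest points in it.
-/

open scoped BigOperators

/-- The all-ones vector in `ℝ^k`. -/
noncomputable def onesVec (k : ℕ) : EuclideanSpace ℝ (Fin k) :=
  (WithLp.equiv 2 (Fin k → ℝ)).symm fun _ => 1

open scoped RealInnerProductSpace

section Pythagoras

variable {E : Type*} [NormedAddCommGroup E] [InnerProductSpace ℝ E]

theorem norm_sub_sq_eq_of_inner_eq_zero {x y p : E} (h : ⟪p - y, y - x⟫ = 0) :
    ‖p - x‖ * ‖p - x‖ = ‖p - y‖ * ‖p - y‖ + ‖y - x‖ * ‖y - x‖ := by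
  rw [← norm_add_sq_eq_norm_sq_add_norm_sq_real h, sub_add_sub_cancel]

theorem norm_sub_le_norm_sub_iff_of_inner_eq_zero {x y p r : E}
    (hp : ⟪p - y, y - x⟫ = 0) (hr : ⟪r - y, y - x⟫ = 0) :
    ‖p - x‖ ≤ ‖r - x‖ ↔ ‖p - y‖ ≤ ‖r - y‖ := by
  rw [mul_self_le_mul_self_iff (norm_nonneg _) (norm_nonneg _),
    mul_self_le_mul_self_iff (norm_nonneg _) (norm_nonneg _),
    norm_sub_sq_eq_of_inner_eq_zero hp, norm_sub_sq_eq_of_inner_eq_zero hr, add_le_add_iff_right]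

end Pythagoras

section OnesVec

variable {k : ℕ}

@[simp]
theorem onesVec_apply (i : Fin k) : onesVec k i = 1 := rfl

theorem inner_onesVec (v : EuclideanSpace ℝ (Fin k)) : ⟪v, onesVec k⟫ = ∑ i, v i := by
  simp [PiLp.inner_apply]

theorem sum_sub_smul_onesVec (x : EuclideanSpace ℝ (Fin k)) (c : ℝ) :
    ∑ i, (x - c • onesVec k) i = ∑ i, x i - k * c := by
  simp [Finset.sum_sub_distrib]

theorem inner_sub_smul_onesVec_eq_zero {p y : EuclideanSpace ℝ (Fin k)}
    (hp : ∑ i, p i = 1) (hy : ∑ i, y i = 1) (c : ℝ) : ⟪p - y, c • onesVec k⟫ = 0 := by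
  simp only [real_inner_smul_right, inner_onesVec, PiLp.sub_apply, Finset.sum_sub_distrib, hp, hy,
    sub_self, mul_zero]

end OnesVec

theorem ne_zero_of_mem_simplex {k : ℕ} {p : EuclideanSpace ℝ (Fin k)} (hp : p ∈ simplex k) :
    k ≠ 0 := by
  rintro rfl
  simpa using hp.2

theorem stmt_17_general (k : ℕ) (x : EuclideanSpace ℝ (Fin k))
    (xt : EuclideanSpace ℝ (Fin k))
    (hxt : xt = x - (((∑ i, x i) - 1) / (k : ℝ)) • onesVec k) :
    (∀ q, IsL2ProjOnSimplex k x q ↔ IsL2ProjOnSimplex k xt q) ∧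
      (xt ∈ simplex k → IsL2ProjOnSimplex k x xt) := by
  have horth : ∀ p ∈ simplex k, ⟪p - xt, xt - x⟫ = 0 := by
    intro p hp
    have hk : (k : ℝ) ≠ 0 := Nat.cast_ne_zero.2 (ne_zero_of_mem_simplex hp)
    have hxt_sum : ∑ i, xt i = 1 := by
      rw [hxt, sum_sub_smul_onesVec, mul_div_cancel₀ _ hk, sub_sub_cancel]
    have hdiff : xt - x = -(((∑ i, x i) - 1) / (k : ℝ)) • onesVec k := by
      rw [hxt, sub_sub_cancel_left, neg_smul]
    rw [hdiff]
    exact inner_sub_smul_onesVec_eq_zero hp.2 hxt_sum _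
  have hproj : ∀ q, IsL2ProjOnSimplex k x q ↔ IsL2ProjOnSimplex k xt q := fun q =>
    and_congr_right fun hq => forall₂_congr fun r hr =>
      norm_sub_le_norm_sub_iff_of_inner_eq_zero (horth q hq) (horth r hr)
  exact ⟨hproj, fun hxt_mem => (hproj xt).2 ⟨hxt_mem, fun r _ => by simp⟩⟩

/-- for every `x ∈ ℝ^k`, letting `x̃ = x − ((∑ i, x i − 1)/k) • 𝟙` be the
orthogonal projection of `x` onto the hyperplane `{z : ∑ i z i = 1}`, the projections onto
the simplex of `x` and of `x̃` coincide; in particular, if `x̃ ∈ Δ_k` then `Π(x) = x̃`. -/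
theorem stmt_17 (k : ℕ) (hk : 1 ≤ k) (x : EuclideanSpace ℝ (Fin k))
    (xt : EuclideanSpace ℝ (Fin k))
    (hxt : xt = x - (((∑ i, x i) - 1) / (k : ℝ)) • onesVec k) :
    (∀ q, IsL2ProjOnSimplex k x q ↔ IsL2ProjOnSimplex k xt q) ∧
      (xt ∈ simplex k → IsL2ProjOnSimplex k x xt) :=
  stmt_17_general k x xt hxt
end

section
/- For every k ≥ 1 and every h ∈ Δ_k having a unique maximal coordinate (i.e., there is an index i with h_i > h_j for all j ≠ i), there exists γ₀ > 0 such that for all γ ∈ (0, γ₀], the projection of the scaled vector places all mass on that coordinate: Π(h/γ) = e_i. -/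
open scoped BigOperators

/-!
The vertex `e_i` is the projection of `x` onto the simplex as soon as `x i` exceeds every
other coordinate by at least `1`: then `x - e_i` makes an obtuse angle with `r - e_i` for
every `r` in the simplex. Dividing `h` by a small `γ` blows the positive gaps `h i - h j`
up beyond `1`.
-/

open Filter Topology

theorem norm_sub_le_norm_sub_of_inner_le_zero {F : Type*} [NormedAddCommGroup F]
    [InnerProductSpace ℝ F] {x q r : F} (h : inner ℝ (x - q) (r - q) ≤ 0) :
    ‖q - x‖ ≤ ‖r - x‖ := by
  have hsq : ‖r - x‖ ^ 2 = ‖r - q‖ ^ 2 - 2 * inner ℝ (r - q) (x - q) + ‖x - q‖ ^ 2 := by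
    rw [← norm_sub_sq_real, sub_sub_sub_cancel_right]
  rw [norm_sub_rev q x, ← sq_le_sq₀ (norm_nonneg _) (norm_nonneg _), hsq, real_inner_comm]
  nlinarith [sq_nonneg ‖r - q‖]

theorem exists_pos_forall_add_le_of_forall_lt {ι : Type*} [Finite ι] {f : ι → ℝ} {i : ι}
    (hf : ∀ j, j ≠ i → f j < f i) : ∃ δ > 0, ∀ j, j ≠ i → f j + δ ≤ f i := by
  have hsmall : ∀ᶠ δ in 𝓝[>] (0 : ℝ), ∀ j, j ≠ i → f j + δ ≤ f i := by
    refine eventually_all.2 fun j => ?_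
    by_cases hj : j = i
    · exact .of_forall fun _ hji => absurd hj hji
    · filter_upwards [nhdsWithin_le_nhds (eventually_lt_nhds (sub_pos.2 (hf j hj)))]
        with δ hδ _
      linarith
  obtain ⟨δ, hδ, hpos⟩ := (hsmall.and self_mem_nhdsWithin).exists
  exact ⟨δ, hpos, hδ⟩

theorem single_mem_simplex {k : ℕ} (i : Fin k) : EuclideanSpace.single i (1 : ℝ) ∈ simplex k :=
  ⟨fun j => by by_cases hj : j = i <;> simp [hj], by simp⟩

theorem isL2ProjOnSimplex_single_of_forall_add_one_le {k : ℕ} {x : EuclideanSpace ℝ (Fin k)}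
    {i : Fin k} (hx : ∀ j, j ≠ i → x j + 1 ≤ x i) :
    IsL2ProjOnSimplex k x (EuclideanSpace.single i 1) := by
  set e : EuclideanSpace ℝ (Fin k) := EuclideanSpace.single i 1
  refine ⟨single_mem_simplex i, fun r ⟨hr, hr_sum⟩ => norm_sub_le_norm_sub_of_inner_le_zero ?_⟩
  -- the coordinates of `r - e` sum to zero, so each `x j` may be raised to `x i - 1`
  have hcoord : ∀ j, (r j - e j) * (x j - e j) ≤ (r j - e j) * (x i - 1) := by
    intro j
    by_cases hj : j = i
    · simp [e, hj]
    · simpa [e, hj] using mul_le_mul_of_nonneg_left (le_sub_iff_add_le.2 (hx j hj)) (hr j)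
  calc inner ℝ (x - e) (r - e) = ∑ j, (r j - e j) * (x j - e j) := by simp [PiLp.inner_apply]
    _ ≤ ∑ j, (r j - e j) * (x i - 1) := Finset.sum_le_sum fun j _ => hcoord j
    _ = 0 := by rw [← Finset.sum_mul, Finset.sum_sub_distrib, hr_sum, (single_mem_simplex i).2,
        sub_self, zero_mul]

theorem stmt_18_general (k : ℕ) (h : EuclideanSpace ℝ (Fin k))
    (i : Fin k) (hi : ∀ j, j ≠ i → h j < h i) :
    ∃ γ₀ > (0 : ℝ), ∀ γ ∈ Set.Ioc (0 : ℝ) γ₀,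
      IsL2ProjOnSimplex k (γ⁻¹ • h) (EuclideanSpace.single i (1 : ℝ)) := by
  obtain ⟨δ, hδ, hgap⟩ := exists_pos_forall_add_le_of_forall_lt hi
  refine ⟨δ, hδ, fun γ ⟨hγ, hγδ⟩ => isL2ProjOnSimplex_single_of_forall_add_one_le ?_⟩
  intro j hj
  have hscaled : γ⁻¹ * (h j + γ) ≤ γ⁻¹ * h i :=
    mul_le_mul_of_nonneg_left (by linarith [hgap j hj]) (inv_nonneg.2 hγ.le)
  simpa [mul_add, inv_mul_cancel₀ hγ.ne'] using hscaled

/-- for every `k ≥ 1` and every `h ∈ Δ_k` with a unique maximal coordinate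
`i` (i.e. `h i > h j` for all `j ≠ i`), there exists `γ₀ > 0` such that for all
`γ ∈ (0, γ₀]`, the projection of `h/γ` onto the simplex is `e_i`. -/
theorem stmt_18 (k : ℕ) (hk : 1 ≤ k) (h : EuclideanSpace ℝ (Fin k)) (hh : h ∈ simplex k)
    (i : Fin k) (hi : ∀ j, j ≠ i → h j < h i) :
    ∃ γ₀ > (0 : ℝ), ∀ γ ∈ Set.Ioc (0 : ℝ) γ₀,
      IsL2ProjOnSimplex k (γ⁻¹ • h) (EuclideanSpace.single i (1 : ℝ)) :=
  stmt_18_general k h i hi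
end
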